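/- arXiv:2604.09780 — 2 statements merged into one kernel-verified Lean document; each statement's English description precedes it below -/
import Mathlib

section
/- Let E and D be positive integers. There exists a constant C > 0, depending only on E, with the following property. For every positive integer N, every real E × D matrix P, every μ ∈ ℝ^D, every ξ_1, …, ξ_N ∈ ℝ^D with Σ_{i=1}^{N} ξ_i = 0, and every ε ∈ (0, 1], if max_{1 ≤ i ≤ N} ‖P(μ + ξ_i)‖₂ ≤ ε, then ‖(1/N) Σ_{i=1}^{N} softmax(P(μ + ξ_i)) − (1/E)·𝟙 − (1/E)·Π_E P μ‖₂ ≤ C ε². -/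
/-!
Write `exp z = 𝟙 + z + r` coordinatewise, where `‖r‖ ≤ ‖z‖²` once `‖z‖ ≤ 1`, and let
`S = ∑ j, exp z_j`. Since `Π_E 𝟙 = 0` and softmax sums to one, `softmax z - 𝟙/E = S⁻¹ Π_E (z + r)`,
so the error of the first-order approximation is `S⁻¹ Π_E r + (S⁻¹ - E⁻¹) Π_E z`. As `Π_E` is a
contraction, `S ≥ E/3` and `|S - E| ≤ 2E‖z‖`, this error is at most `9‖z‖²/E`. The approximation
is affine in `z` and the `ξ_i` sum to zero, so averaging over `i` preserves the bound.
-/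

open Matrix

/-- Coordinatewise softmax on Euclidean space ℝ^E. -/
noncomputable def softmax {E : ℕ} (z : EuclideanSpace ℝ (Fin E)) : EuclideanSpace ℝ (Fin E) :=
  WithLp.toLp 2 (fun e => Real.exp (z e) / ∑ j, Real.exp (z j))

/-- The all-ones vector 𝟙 ∈ ℝ^E. -/
def onesE (E : ℕ) : EuclideanSpace ℝ (Fin E) := WithLp.toLp 2 (fun _ => 1)

/-- The orthogonal projector onto the orthogonal complement of the all-ones vector:
`Π_E = I_E - (1/E) 𝟙𝟙ᵀ`. -/
noncomputable def projE (E : ℕ) : Matrix (Fin E) (Fin E) ℝ :=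
  1 - (E : ℝ)⁻¹ • vecMulVec (fun _ => 1) (fun _ => 1)

/-- Matrix acting on Euclidean space vectors. -/
noncomputable def matApp {E D : ℕ} (P : Matrix (Fin E) (Fin D) ℝ)
    (x : EuclideanSpace ℝ (Fin D)) : EuclideanSpace ℝ (Fin E) :=
  Matrix.toEuclideanLin P x

section
variable {E : ℕ}

lemma inner_onesE (v : EuclideanSpace ℝ (Fin E)) : inner ℝ v (onesE E) = ∑ j, v j := by
  simp [onesE, PiLp.inner_apply]

lemma norm_onesE_sq : ‖onesE E‖ ^ 2 = E := by
  rw [← real_inner_self_eq_norm_sq, inner_onesE]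
  simp [onesE]

lemma matApp_projE (v : EuclideanSpace ℝ (Fin E)) :
    matApp (projE E) v = v - ((E : ℝ)⁻¹ * ∑ j, v j) • onesE E := by
  ext e
  simp [matApp, projE, onesE, mulVec, dotProduct, vecMulVec_apply, Finset.mul_sum]

lemma norm_matApp_projE_sq (v : EuclideanSpace ℝ (Fin E)) :
    ‖matApp (projE E) v‖ ^ 2 = ‖v‖ ^ 2 - (E : ℝ)⁻¹ * (∑ j, v j) ^ 2 := by
  rw [matApp_projE, norm_sub_sq_real, real_inner_smul_right, inner_onesE, norm_smul,
    mul_pow, norm_onesE_sq, Real.norm_eq_abs, sq_abs]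
  rcases eq_or_ne (E : ℝ) 0 with hE | hE
  · simp [hE]
  · field_simp
    ring

lemma norm_matApp_projE_le (v : EuclideanSpace ℝ (Fin E)) : ‖matApp (projE E) v‖ ≤ ‖v‖ := by
  refine le_of_sq_le_sq ?_ (norm_nonneg v)
  rw [norm_matApp_projE_sq]
  have : 0 ≤ (E : ℝ)⁻¹ * (∑ j, v j) ^ 2 := by positivity
  linarith

noncomputable def expRemainder (z : EuclideanSpace ℝ (Fin E)) : EuclideanSpace ℝ (Fin E) :=
  WithLp.toLp 2 (fun j => Real.exp (z j) - 1 - z j)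

lemma norm_expRemainder_le {z : EuclideanSpace ℝ (Fin E)} (hz : ‖z‖ ≤ 1) :
    ‖expRemainder z‖ ≤ ‖z‖ ^ 2 := by
  refine le_of_sq_le_sq ?_ (by positivity)
  rw [EuclideanSpace.real_norm_sq_eq, EuclideanSpace.real_norm_sq_eq]
  calc ∑ j, (expRemainder z j) ^ 2 ≤ ∑ j, ((z j) ^ 2) ^ 2 := by
        refine Finset.sum_le_sum fun j _ => sq_le_sq.2 ?_
        have hzj : |z j| ≤ 1 := (PiLp.norm_apply_le z j).trans hz
        exact (Real.abs_exp_sub_one_sub_id_le hzj).trans (le_abs_self _)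
    _ ≤ (∑ j, (z j) ^ 2) ^ 2 := Finset.sum_sq_le_sq_sum_of_nonneg fun j _ => sq_nonneg _

lemma softmax_sub_linearization_eq (hE : 0 < E) (z : EuclideanSpace ℝ (Fin E)) :
    softmax z - (E : ℝ)⁻¹ • onesE E - (E : ℝ)⁻¹ • matApp (projE E) z =
      (∑ j, Real.exp (z j))⁻¹ • matApp (projE E) (expRemainder z) +
        ((∑ j, Real.exp (z j))⁻¹ - (E : ℝ)⁻¹) • matApp (projE E) z := by
  have hS : 0 < ∑ j, Real.exp (z j) :=
    Finset.sum_pos (fun j _ => Real.exp_pos _) (Finset.univ_nonempty_iff.2 ⟨⟨0, hE⟩⟩)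
  ext e
  simp [matApp_projE, softmax, onesE, expRemainder, Finset.sum_sub_distrib]
  field_simp
  ring

lemma div_three_le_sum_exp {z : EuclideanSpace ℝ (Fin E)} (hz : ‖z‖ ≤ 1) :
    (E : ℝ) / 3 ≤ ∑ j, Real.exp (z j) := by
  calc (E : ℝ) / 3 = ∑ _j : Fin E, 1 / 3 := by simp [div_eq_mul_inv]
    _ ≤ ∑ j, Real.exp (z j) := Finset.sum_le_sum fun j _ => by
        have hzj : -1 ≤ z j := (abs_le.1 ((PiLp.norm_apply_le z j).trans hz)).1
        linarith [Real.exp_neg_one_gt_d9, Real.exp_le_exp.2 hzj]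

lemma abs_sum_exp_sub_le {z : EuclideanSpace ℝ (Fin E)} (hz : ‖z‖ ≤ 1) :
    |∑ j, Real.exp (z j) - E| ≤ 2 * E * ‖z‖ := by
  calc |∑ j, Real.exp (z j) - E| = |∑ j, (Real.exp (z j) - 1)| := by simp
    _ ≤ ∑ j, |Real.exp (z j) - 1| := Finset.abs_sum_le_sum_abs _ _
    _ ≤ ∑ _j : Fin E, 2 * ‖z‖ := Finset.sum_le_sum fun j _ => by
        have hzj : |z j| ≤ ‖z‖ := PiLp.norm_apply_le z j
        linarith [Real.abs_exp_sub_one_le (hzj.trans hz)]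
    _ = 2 * E * ‖z‖ := by simp; ring

lemma norm_softmax_sub_linearization_le (hE : 0 < E) {z : EuclideanSpace ℝ (Fin E)}
    (hz : ‖z‖ ≤ 1) :
    ‖softmax z - (E : ℝ)⁻¹ • onesE E - (E : ℝ)⁻¹ • matApp (projE E) z‖ ≤ 9 / E * ‖z‖ ^ 2 := by
  set S := ∑ j, Real.exp (z j)
  have hE' : (0 : ℝ) < E := by exact_mod_cast hE
  have hS : E / 3 ≤ S := div_three_le_sum_exp hz
  have hS_pos : 0 < S := by linarith [div_pos hE' three_pos]
  have hS_inv : S⁻¹ ≤ 3 / E := by simpa using inv_anti₀ (by positivity) hS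
  have hS_sub : |S⁻¹ - (E : ℝ)⁻¹| ≤ 6 / E * ‖z‖ := by
    rw [inv_sub_inv hS_pos.ne' hE'.ne', abs_div, abs_sub_comm, abs_of_pos (mul_pos hS_pos hE')]
    rw [div_le_iff₀ (by positivity)]
    calc |S - E| ≤ 2 * E * ‖z‖ := abs_sum_exp_sub_le hz
      _ = 6 * ‖z‖ * (E / 3) := by ring
      _ ≤ 6 * ‖z‖ * S := by gcongr
      _ = 6 / E * ‖z‖ * (S * E) := by field_simp
  rw [softmax_sub_linearization_eq hE]
  calc _ ≤ S⁻¹ * ‖expRemainder z‖ + |S⁻¹ - (E : ℝ)⁻¹| * ‖z‖ := by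
        refine norm_add_le_of_le ?_ ?_ <;> rw [norm_smul, Real.norm_eq_abs]
        · rw [abs_of_pos (inv_pos.2 hS_pos)]
          gcongr
          exact norm_matApp_projE_le _
        · gcongr
          exact norm_matApp_projE_le _
    _ ≤ 3 / E * ‖z‖ ^ 2 + 6 / E * ‖z‖ * ‖z‖ := by
        gcongr
        exact norm_expRemainder_le hz
    _ = 9 / E * ‖z‖ ^ 2 := by ring
end

lemma norm_inv_card_smul_sum_le {ι V : Type*} [Fintype ι] [Nonempty ι]
    [SeminormedAddCommGroup V] [NormedSpace ℝ V] {f : ι → V} {c : ℝ} (h : ∀ i, ‖f i‖ ≤ c) :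
    ‖(Fintype.card ι : ℝ)⁻¹ • ∑ i, f i‖ ≤ c := by
  have hcard : (0 : ℝ) < Fintype.card ι := by exact_mod_cast Fintype.card_pos
  rw [norm_smul, norm_inv, Real.norm_natCast, inv_mul_le_iff₀ hcard]
  simpa using norm_sum_le_of_le Finset.univ fun i _ => h i

theorem stmt8_general (E D : ℕ) (hE : 0 < E) :
    ∃ C > (0 : ℝ),
      ∀ (N : ℕ), 0 < N →
      ∀ (P : Matrix (Fin E) (Fin D) ℝ) (μ : EuclideanSpace ℝ (Fin D))
        (ξ : Fin N → EuclideanSpace ℝ (Fin D)), (∑ i, ξ i) = 0 →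
      ∀ ε : ℝ, 0 < ε → ε ≤ 1 →
      (∀ i : Fin N, ‖matApp P (μ + ξ i)‖ ≤ ε) →
      ‖(N : ℝ)⁻¹ • (∑ i, softmax (matApp P (μ + ξ i)))
          - (E : ℝ)⁻¹ • onesE E
          - (E : ℝ)⁻¹ • matApp (projE E) (matApp P μ)‖ ≤ C * ε ^ 2 := by
  refine ⟨9 / E, by positivity, fun N hN P μ ξ hξ ε _ hε1 hz => ?_⟩
  set z := fun i => matApp P (μ + ξ i)
  have hproj_sum : ∑ i, matApp (projE E) (z i) = (N : ℝ) • matApp (projE E) (matApp P μ) := by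
    simp [z, matApp, Finset.sum_add_distrib, ← map_sum, hξ, ← Nat.cast_smul_eq_nsmul ℝ]
  have hN' : (N : ℝ) ≠ 0 := by exact_mod_cast hN.ne'
  have : Nonempty (Fin N) := ⟨⟨0, hN⟩⟩
  have hmean : (N : ℝ)⁻¹ • (∑ i, softmax (z i)) - (E : ℝ)⁻¹ • onesE E
      - (E : ℝ)⁻¹ • matApp (projE E) (matApp P μ) = (Fintype.card (Fin N) : ℝ)⁻¹ •
        ∑ i, (softmax (z i) - (E : ℝ)⁻¹ • onesE E - (E : ℝ)⁻¹ • matApp (projE E) (z i)) := by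
    simp only [Finset.sum_sub_distrib, ← Finset.smul_sum, hproj_sum, Finset.sum_const,
      Finset.card_univ, Fintype.card_fin, smul_sub, ← Nat.cast_smul_eq_nsmul ℝ,
      smul_comm _ (N : ℝ), smul_inv_smul₀ hN']
  rw [hmean]
  refine norm_inv_card_smul_sum_le fun i => ?_
  calc _ ≤ 9 / E * ‖z i‖ ^ 2 := norm_softmax_sub_linearization_le hE ((hz i).trans hε1)
    _ ≤ 9 / E * ε ^ 2 := by gcongr; exact hz i

theorem stmt8 (E D : ℕ) (hE : 0 < E) (hD : 0 < D) :
    ∃ C > (0 : ℝ),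
      ∀ (N : ℕ), 0 < N →
      ∀ (P : Matrix (Fin E) (Fin D) ℝ) (μ : EuclideanSpace ℝ (Fin D))
        (ξ : Fin N → EuclideanSpace ℝ (Fin D)), (∑ i, ξ i) = 0 →
      ∀ ε : ℝ, 0 < ε → ε ≤ 1 →
      (∀ i : Fin N, ‖matApp P (μ + ξ i)‖ ≤ ε) →
      ‖(N : ℝ)⁻¹ • (∑ i, softmax (matApp P (μ + ξ i)))
          - (E : ℝ)⁻¹ • onesE E
          - (E : ℝ)⁻¹ • matApp (projE E) (matApp P μ)‖ ≤ C * ε ^ 2 :=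
  stmt8_general E D hE
end

section
/- Let E and D be positive integers and define the simplified load-balancing loss L_bal(P) := ‖(1/N) Σ_{i=1}^{N} softmax(P(μ + ξ_i)) − (1/E)·𝟙‖₂² for a real E × D matrix P, μ ∈ ℝ^D, and ξ_1, …, ξ_N ∈ ℝ^D. There exists a constant C > 0, depending only on E, with the following property. For every positive integer N, every such P, μ, ξ_1, …, ξ_N with Σ_{i=1}^{N} ξ_i = 0, and every ε ∈ (0, 1], if max_{1 ≤ i ≤ N} ‖P(μ + ξ_i)‖₂ ≤ ε, then |L_bal(P) − (1/E²)·‖Π_E P μ‖₂²| ≤ C ε³. -/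
open Matrix

/-- The simplified load-balancing loss
`L_bal(P) = ‖(1/N) Σᵢ softmax(P(μ + ξᵢ)) − (1/E)𝟙‖₂²`. -/
noncomputable def Lbal {E D N : ℕ} (P : Matrix (Fin E) (Fin D) ℝ)
    (μ : EuclideanSpace ℝ (Fin D)) (ξ : Fin N → EuclideanSpace ℝ (Fin D)) : ℝ :=
  ‖(N : ℝ)⁻¹ • (∑ i, softmax (matApp P (μ + ξ i))) - (E : ℝ)⁻¹ • onesE E‖ ^ 2

/-! On the unit ball, `softmax z = 𝟙/E + (1/E) Π_E z + O(‖z‖²)`: expand `exp t = 1 + t + O(t²)`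
in the numerator and in the normalising sum. Averaging over the `N` inputs, the linear terms
average to `(1/E) Π_E P μ` because the `ξ_i` sum to zero, so the averaged softmax minus `𝟙/E`
is `v + r` with `v = (1/E) Π_E P μ`, `‖v‖ = O(ε)` and `‖r‖ = O(ε²)`. Hence
`‖v + r‖² - ‖v‖² = 2⟪v, r⟫ + ‖r‖² = O(ε³)`. -/
open Real

section Averages

variable {ι F G : Type*} [Fintype ι] [Nonempty ι]
  [NormedAddCommGroup F] [NormedSpace ℝ F] [NormedAddCommGroup G] [InnerProductSpace ℝ G]

lemma norm_inv_card_smul_sum_le_s9 {x : ι → F} {a : ℝ} (hx : ∀ i, ‖x i‖ ≤ a) :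
    ‖(Fintype.card ι : ℝ)⁻¹ • ∑ i, x i‖ ≤ a := by
  have hcard : (0 : ℝ) < Fintype.card ι := by exact_mod_cast Fintype.card_pos
  rw [norm_smul, norm_inv, Real.norm_natCast, inv_mul_le_iff₀ hcard]
  calc ‖∑ i, x i‖ ≤ ∑ i, ‖x i‖ := norm_sum_le _ _
    _ ≤ ∑ _i : ι, a := Finset.sum_le_sum fun i _ => hx i
    _ = Fintype.card ι * a := by simp

lemma norm_inv_card_smul_sum_sub_sub_le (f : F → G) (c : G) (L : F →L[ℝ] G) {B ε : ℝ}
    (hB : 0 ≤ B) (hf : ∀ z, ‖z‖ ≤ 1 → ‖f z - c - L z‖ ≤ B * ‖z‖ ^ 2)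
    {z : ι → F} (hε : ε ≤ 1) (hz : ∀ i, ‖z i‖ ≤ ε) :
    ‖(Fintype.card ι : ℝ)⁻¹ • ∑ i, f (z i) - c - L ((Fintype.card ι : ℝ)⁻¹ • ∑ i, z i)‖
      ≤ B * ε ^ 2 := by
  have hcard : (Fintype.card ι : ℝ) ≠ 0 := by exact_mod_cast Fintype.card_ne_zero
  have hsplit : (Fintype.card ι : ℝ)⁻¹ • ∑ i, f (z i) - c - L ((Fintype.card ι : ℝ)⁻¹ • ∑ i, z i)
      = (Fintype.card ι : ℝ)⁻¹ • ∑ i, (f (z i) - c - L (z i)) := by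
    rw [Finset.sum_sub_distrib, Finset.sum_sub_distrib, Finset.sum_const, Finset.card_univ,
      ← Nat.cast_smul_eq_nsmul ℝ, smul_sub, smul_sub, smul_smul, inv_mul_cancel₀ hcard, one_smul,
      map_smul, map_sum]
  rw [hsplit]
  exact norm_inv_card_smul_sum_le_s9 fun i => (hf _ ((hz i).trans hε)).trans
    (mul_le_mul_of_nonneg_left (pow_le_pow_left₀ (norm_nonneg _) (hz i) 2) hB)

lemma abs_norm_add_sq_sub_norm_sq_le (v r : G) :
    |‖v + r‖ ^ 2 - ‖v‖ ^ 2| ≤ (2 * ‖v‖ + ‖r‖) * ‖r‖ := by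
  rw [norm_add_sq_real]
  calc |‖v‖ ^ 2 + 2 * inner ℝ v r + ‖r‖ ^ 2 - ‖v‖ ^ 2| = |2 * inner ℝ v r + ‖r‖ ^ 2| := by ring_nf
    _ ≤ 2 * |inner ℝ v r| + ‖r‖ ^ 2 := by
      refine (abs_add_le _ _).trans ?_
      rw [abs_mul, abs_two, abs_of_nonneg (sq_nonneg ‖r‖)]
    _ ≤ 2 * (‖v‖ * ‖r‖) + ‖r‖ ^ 2 := by gcongr; exact abs_real_inner_le_norm v r
    _ = (2 * ‖v‖ + ‖r‖) * ‖r‖ := by ring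

theorem abs_norm_inv_card_smul_sum_sub_sq_sub_le (f : F → G) (c : G) (L : F →L[ℝ] G) {B ε : ℝ}
    (hB : 0 ≤ B) (hf : ∀ z, ‖z‖ ≤ 1 → ‖f z - c - L z‖ ≤ B * ‖z‖ ^ 2)
    {z : ι → F} (hε : ε ≤ 1) (hz : ∀ i, ‖z i‖ ≤ ε) :
    |‖(Fintype.card ι : ℝ)⁻¹ • ∑ i, f (z i) - c‖ ^ 2
        - ‖L ((Fintype.card ι : ℝ)⁻¹ • ∑ i, z i)‖ ^ 2| ≤ (2 * ‖L‖ * B + B ^ 2) * ε ^ 3 := by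
  set v := L ((Fintype.card ι : ℝ)⁻¹ • ∑ i, z i)
  set r := (Fintype.card ι : ℝ)⁻¹ • ∑ i, f (z i) - c - v
  have hε0 : 0 ≤ ε := (norm_nonneg _).trans (hz (Classical.arbitrary ι))
  have hv : ‖v‖ ≤ ‖L‖ * ε := L.le_opNorm_of_le (norm_inv_card_smul_sum_le_s9 hz)
  have hr : ‖r‖ ≤ B * ε ^ 2 := norm_inv_card_smul_sum_sub_sub_le f c L hB hf hε hz
  have hε4 : ε ^ 4 ≤ ε ^ 3 := pow_le_pow_of_le_one hε0 hε (by norm_num)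
  calc _ = |‖v + r‖ ^ 2 - ‖v‖ ^ 2| := by rw [add_sub_cancel]
    _ ≤ (2 * ‖v‖ + ‖r‖) * ‖r‖ := abs_norm_add_sq_sub_norm_sq_le v r
    _ ≤ (2 * (‖L‖ * ε) + B * ε ^ 2) * (B * ε ^ 2) := by gcongr
    _ = 2 * ‖L‖ * B * ε ^ 3 + B ^ 2 * ε ^ 4 := by ring
    _ ≤ (2 * ‖L‖ * B + B ^ 2) * ε ^ 3 := by nlinarith [sq_nonneg B]

end Averages

lemma EuclideanSpace.norm_le_sqrt_card_mul {ι : Type*} [Fintype ι] (x : EuclideanSpace ℝ ι)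
    {a : ℝ} (ha : 0 ≤ a) (hx : ∀ i, |x i| ≤ a) : ‖x‖ ≤ √(Fintype.card ι) * a := by
  rw [EuclideanSpace.norm_eq, ← Real.sqrt_sq ha, ← Real.sqrt_mul (Nat.cast_nonneg _)]
  refine Real.sqrt_le_sqrt ?_
  calc ∑ i, ‖x i‖ ^ 2 ≤ ∑ _i : ι, a ^ 2 :=
        Finset.sum_le_sum fun i _ => by rw [Real.norm_eq_abs]; gcongr; exact hx i
    _ = Fintype.card ι * a ^ 2 := by simp

lemma toEuclideanCLM_projE_apply {E : ℕ} (z : EuclideanSpace ℝ (Fin E)) (e : Fin E) :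
    toEuclideanCLM (𝕜 := ℝ) (projE E) z e = z e - (E : ℝ)⁻¹ * ∑ j, z j := by
  simp [projE, vecMulVec_apply, mulVec, dotProduct, Finset.mul_sum]

lemma abs_softmax_apply_sub_le {E : ℕ} (z : EuclideanSpace ℝ (Fin E)) (hz : ‖z‖ ≤ 1)
    (e : Fin E) :
    |softmax z e - (E : ℝ)⁻¹ - (E : ℝ)⁻¹ * (z e - (E : ℝ)⁻¹ * ∑ j, z j)|
      ≤ 3 * (E + 1) / (E ^ 2 * exp (-1)) * ‖z‖ ^ 2 := by
  have hE : (0 : ℝ) < E := by exact_mod_cast e.pos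
  have hcoord : ∀ j, |z j| ≤ ‖z‖ := fun j => by simpa using PiLp.norm_apply_le z j
  set r : Fin E → ℝ := fun j => exp (z j) - 1 - z j with hr_def
  set T := ∑ j, z j
  set R := ∑ j, r j
  set S := ∑ j, exp (z j)
  have hr : ∀ j, |r j| ≤ z j ^ 2 := fun j => abs_exp_sub_one_sub_id_le ((hcoord j).trans hz)
  have hze : z e ^ 2 ≤ ‖z‖ ^ 2 := by rw [← sq_abs]; gcongr; exact hcoord e
  have hT : |T| ≤ E * ‖z‖ := by
    calc |T| ≤ ∑ j, |z j| := Finset.abs_sum_le_sum_abs _ _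
      _ ≤ ∑ _j : Fin E, ‖z‖ := Finset.sum_le_sum fun j _ => hcoord j
      _ = E * ‖z‖ := by simp
  have hR : |R| ≤ ‖z‖ ^ 2 := by
    calc |R| ≤ ∑ j, |r j| := Finset.abs_sum_le_sum_abs _ _
      _ ≤ ∑ j, z j ^ 2 := Finset.sum_le_sum fun j _ => hr j
      _ = ‖z‖ ^ 2 := (EuclideanSpace.real_norm_sq_eq z).symm
  have hS_eq : S = E + T + R := by
    simp only [S, T, R, hr_def, Finset.sum_sub_distrib]
    simp
  have hS : E * (E * exp (-1)) ≤ E * S := by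
    gcongr
    calc E * exp (-1) = ∑ _j : Fin E, exp (-1) := by simp
      _ ≤ S := Finset.sum_le_sum fun j _ =>
        exp_le_exp.mpr (neg_le_of_abs_le ((hcoord j).trans hz))
  have hSpos : 0 < S := lt_of_lt_of_le (by positivity) (le_of_mul_le_mul_left hS hE)
  have hid : softmax z e - (E : ℝ)⁻¹ - (E : ℝ)⁻¹ * (z e - (E : ℝ)⁻¹ * T)
      = (E * r e - R - (T + R) * (z e - T / E)) / (E * S) := by
    have hsoftmax : softmax z e = exp (z e) / S := rfl
    have hexp : exp (z e) = 1 + z e + r e := by simp [hr_def]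
    rw [hsoftmax, hexp, hS_eq]
    rw [hS_eq] at hSpos
    field_simp
    ring
  have hnum : |E * r e - R - (T + R) * (z e - T / E)| ≤ 3 * (E + 1) * ‖z‖ ^ 2 := by
    have hlin : |z e - T / E| ≤ 2 * ‖z‖ := by
      have : |T / E| ≤ ‖z‖ := by
        rw [abs_div, abs_of_pos hE, div_le_iff₀ hE]; linarith
      linarith [abs_sub (z e) (T / E), hcoord e]
    have hquad : |(T + R) * (z e - T / E)| ≤ (E * ‖z‖ + ‖z‖ ^ 2) * (2 * ‖z‖) := by
      rw [abs_mul]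
      exact mul_le_mul ((abs_add_le _ _).trans (add_le_add hT hR)) hlin (abs_nonneg _)
        (by positivity)
    have hcube : ‖z‖ ^ 3 ≤ ‖z‖ ^ 2 := pow_le_pow_of_le_one (norm_nonneg z) hz (by norm_num)
    have hre : |E * r e| ≤ E * ‖z‖ ^ 2 := by
      rw [abs_mul, abs_of_pos hE]; gcongr; exact (hr e).trans hze
    calc _ ≤ |E * r e| + |R| + |(T + R) * (z e - T / E)| := by
          linarith [abs_sub (E * r e - R) ((T + R) * (z e - T / E)), abs_sub (E * r e) R]
      _ ≤ E * ‖z‖ ^ 2 + ‖z‖ ^ 2 + (E * ‖z‖ + ‖z‖ ^ 2) * (2 * ‖z‖) := by gcongr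
      _ ≤ 3 * (E + 1) * ‖z‖ ^ 2 := by nlinarith
  rw [hid, abs_div, abs_of_pos (by positivity : (0 : ℝ) < E * S)]
  calc _ ≤ 3 * (E + 1) * ‖z‖ ^ 2 / (E * (E * exp (-1))) :=
        div_le_div₀ (by positivity) hnum (by positivity) hS
    _ = _ := by ring

lemma norm_softmax_sub_sub_le {E : ℕ} (z : EuclideanSpace ℝ (Fin E)) (hz : ‖z‖ ≤ 1) :
    ‖softmax z - (E : ℝ)⁻¹ • onesE E - ((E : ℝ)⁻¹ • toEuclideanCLM (𝕜 := ℝ) (projE E)) z‖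
      ≤ √E * (3 * (E + 1) / (E ^ 2 * exp (-1))) * ‖z‖ ^ 2 := by
  calc _ ≤ √(Fintype.card (Fin E)) * (3 * (E + 1) / (E ^ 2 * exp (-1)) * ‖z‖ ^ 2) :=
        EuclideanSpace.norm_le_sqrt_card_mul _ (by positivity) fun e => ?_
    _ = _ := by rw [Fintype.card_fin, mul_assoc]
  simpa [onesE, toEuclideanCLM_projE_apply] using abs_softmax_apply_sub_le z hz e

theorem stmt9_general (E D : ℕ) :
    ∃ C > (0 : ℝ),
      ∀ (N : ℕ), 0 < N →
      ∀ (P : Matrix (Fin E) (Fin D) ℝ) (μ : EuclideanSpace ℝ (Fin D))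
        (ξ : Fin N → EuclideanSpace ℝ (Fin D)), (∑ i, ξ i) = 0 →
      ∀ ε : ℝ, 0 < ε → ε ≤ 1 →
      (∀ i : Fin N, ‖matApp P (μ + ξ i)‖ ≤ ε) →
      |Lbal P μ ξ - (E : ℝ)⁻¹ ^ 2 * ‖matApp (projE E) (matApp P μ)‖ ^ 2| ≤ C * ε ^ 3 := by
  set B : ℝ := √E * (3 * (E + 1) / (E ^ 2 * exp (-1)))
  set L := (E : ℝ)⁻¹ • toEuclideanCLM (𝕜 := ℝ) (projE E)
  have hB : 0 ≤ B := by positivity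
  refine ⟨2 * ‖L‖ * B + B ^ 2 + 1, by positivity, fun N hN P μ ξ hξ ε _ hε1 hz => ?_⟩
  have : Nonempty (Fin N) := ⟨⟨0, hN⟩⟩
  have hmean : (N : ℝ)⁻¹ • ∑ i, matApp P (μ + ξ i) = matApp P μ := by
    simp only [matApp, ← map_sum, ← map_smul, Finset.sum_add_distrib, hξ, add_zero,
      Finset.sum_const, Finset.card_univ, Fintype.card_fin, ← Nat.cast_smul_eq_nsmul ℝ, smul_smul]
    rw [inv_mul_cancel₀ (by positivity), one_smul]
  have hL : ‖L (matApp P μ)‖ ^ 2 = (E : ℝ)⁻¹ ^ 2 * ‖matApp (projE E) (matApp P μ)‖ ^ 2 := by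
    rw [_root_.smul_apply, norm_smul, norm_inv, Real.norm_natCast, mul_pow]
    rfl
  have key := abs_norm_inv_card_smul_sum_sub_sq_sub_le softmax ((E : ℝ)⁻¹ • onesE E) L hB
    norm_softmax_sub_sub_le hε1 hz
  rw [Fintype.card_fin, hmean, hL] at key
  calc _ ≤ (2 * ‖L‖ * B + B ^ 2) * ε ^ 3 := key
    _ ≤ _ := mul_le_mul_of_nonneg_right (by linarith) (by positivity)

theorem stmt9 (E D : ℕ) (hE : 0 < E) (hD : 0 < D) :
    ∃ C > (0 : ℝ),
      ∀ (N : ℕ), 0 < N →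
      ∀ (P : Matrix (Fin E) (Fin D) ℝ) (μ : EuclideanSpace ℝ (Fin D))
        (ξ : Fin N → EuclideanSpace ℝ (Fin D)), (∑ i, ξ i) = 0 →
      ∀ ε : ℝ, 0 < ε → ε ≤ 1 →
      (∀ i : Fin N, ‖matApp P (μ + ξ i)‖ ≤ ε) →
      |Lbal P μ ξ - (E : ℝ)⁻¹ ^ 2 * ‖matApp (projE E) (matApp P μ)‖ ^ 2| ≤ C * ε ^ 3 :=
  stmt9_general E D
end
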